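/- Let x | z=0 ~ N(μ₀, σ²) and x | z=1 ~ N(μ₁, σ²), and consider threshold classifiers accepting group z iff x ≥ τ_z. Fix effort budget δ > 0. If the classifier satisfies equal improvability, i.e. Φ((τ₀-δ-μ₀)/σ)/Φ((τ₀-μ₀)/σ) = Φ((τ₁-δ-μ₁)/σ)/Φ((τ₁-μ₁)/σ), then τ₀ - μ₀ = τ₁ - μ₁. -/

import Mathlib

/-- Standard normal PDF. -/
noncomputable def stdPdf (x : ℝ) : ℝ := Real.exp (-(x ^ 2) / 2) / Real.sqrt (2 * Real.pi)

/-- Standard normal CDF. -/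
noncomputable def stdCdf (x : ℝ) : ℝ := ∫ t in Set.Iic x, stdPdf t

/-!
The ratio `Φ(a - c) / Φ(a)` is strictly increasing in `a` for every `c > 0` (a form of the
log-concavity of `Φ`), so the equal-improvability identity, read with `a = (τ_z - μ_z) / σ` and
`c = δ / σ`, pins down `a`. Its derivative has the sign of `φ(a - c) Φ(a) - φ(a) Φ(a - c)`, which is
positive because the likelihood ratio `φ(t - c) / φ(t) = exp (c t - c² / 2)` increases in `t`:
on `t < a` it stays below its value at `a`, which is `φ(a - c) / φ(a)`.
-/

open MeasureTheory Set Real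

lemma setIntegral_lt_setIntegral_of_forall_lt {X : Type*} [MeasurableSpace X] {μ : Measure X}
    {s : Set X} {f g : X → ℝ} (hs : MeasurableSet s) (hμs : μ s ≠ 0)
    (hf : IntegrableOn f s μ) (hg : IntegrableOn g s μ) (hlt : ∀ x ∈ s, f x < g x) :
    ∫ x in s, f x ∂μ < ∫ x in s, g x ∂μ := by
  rw [← sub_pos, ← integral_sub hg hf]
  refine (setIntegral_pos_iff_support_of_nonneg_ae ?_ (hg.sub hf)).2 ?_
  · filter_upwards [ae_restrict_mem hs] with x hx
    exact sub_nonneg.2 (hlt x hx).le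
  · have hsupp : s ⊆ Function.support (g - f) := fun x hx => (sub_pos.2 (hlt x hx)).ne'
    rwa [inter_eq_right.2 hsupp, pos_iff_ne_zero]

lemma hasDerivAt_setIntegral_Iic {f : ℝ → ℝ} (hf : Integrable f) (hfc : Continuous f) (x : ℝ) :
    HasDerivAt (fun y => ∫ t in Iic y, f t) (f x) x := by
  have hsplit : ∀ y, ∫ t in Iic y, f t = (∫ t in Iic 0, f t) + ∫ t in (0 : ℝ)..y, f t := fun y => by
    rw [← intervalIntegral.integral_Iic_sub_Iic hf.integrableOn hf.integrableOn]
    ring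
  rw [funext hsplit]
  exact (intervalIntegral.integral_hasDerivAt_right hf.intervalIntegrable
    (hfc.stronglyMeasurableAtFilter _ _) hfc.continuousAt).const_add _

lemma setIntegral_Iic_comp_sub_right (f : ℝ → ℝ) (a c : ℝ) :
    ∫ t in Iic a, f (t - c) = ∫ t in Iic (a - c), f t := by
  have hpre : (fun t : ℝ => t - c) ⁻¹' Iic (a - c) = Iic a := by
    ext t
    simp
  rw [← hpre, (measurePreserving_sub_right volume c).setIntegral_preimage_emb
    (MeasurableEquiv.subRight c).measurableEmbedding]

lemma stdPdf_pos (x : ℝ) : 0 < stdPdf x :=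
  div_pos (exp_pos _) (sqrt_pos.2 (by positivity))

lemma continuous_stdPdf : Continuous stdPdf := by
  unfold stdPdf
  fun_prop

lemma integrable_stdPdf : Integrable stdPdf := by
  convert (integrable_exp_neg_mul_sq (by norm_num : (0 : ℝ) < 1 / 2)).div_const
    (sqrt (2 * π)) using 2 with x
  unfold stdPdf
  ring_nf

lemma stdPdf_sub (t c : ℝ) : stdPdf (t - c) = stdPdf t * exp (c * t - c ^ 2 / 2) := by
  unfold stdPdf
  rw [div_mul_eq_mul_div, ← exp_add]
  ring_nf

lemma stdCdf_pos (x : ℝ) : 0 < stdCdf x := by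
  have h := setIntegral_lt_setIntegral_of_forall_lt (μ := volume) (measurableSet_Iic (a := x))
    (by simp) integrableOn_zero integrable_stdPdf.integrableOn fun t _ => stdPdf_pos t
  simpa [stdCdf] using h

lemma hasDerivAt_stdCdf (x : ℝ) : HasDerivAt stdCdf (stdPdf x) x :=
  hasDerivAt_setIntegral_Iic integrable_stdPdf continuous_stdPdf x

lemma stdCdf_sub_lt {c : ℝ} (hc : 0 < c) (a : ℝ) :
    stdCdf (a - c) < stdCdf a * exp (c * a - c ^ 2 / 2) := by
  rw [stdCdf, stdCdf, ← setIntegral_Iic_comp_sub_right, ← integral_mul_const,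
    integral_Iic_eq_integral_Iio, integral_Iic_eq_integral_Iio]
  refine setIntegral_lt_setIntegral_of_forall_lt measurableSet_Iio (by simp)
    (integrable_stdPdf.comp_sub_right c).integrableOn
    (integrable_stdPdf.mul_const _).integrableOn fun t ht => ?_
  rw [stdPdf_sub]
  gcongr
  · exact stdPdf_pos t
  · exact ht

lemma stdPdf_mul_stdCdf_sub_lt {c : ℝ} (hc : 0 < c) (a : ℝ) :
    stdPdf a * stdCdf (a - c) < stdPdf (a - c) * stdCdf a := by
  calc stdPdf a * stdCdf (a - c) < stdPdf a * (stdCdf a * exp (c * a - c ^ 2 / 2)) :=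
        mul_lt_mul_of_pos_left (stdCdf_sub_lt hc a) (stdPdf_pos a)
    _ = stdPdf (a - c) * stdCdf a := by rw [stdPdf_sub]; ring

lemma strictMono_stdCdf_sub_div_stdCdf {c : ℝ} (hc : 0 < c) :
    StrictMono fun a => stdCdf (a - c) / stdCdf a := by
  refine strictMono_of_deriv_pos fun a => ?_
  have hnum : HasDerivAt (fun a => stdCdf (a - c)) (stdPdf (a - c)) a := by
    simpa using (hasDerivAt_stdCdf (a - c)).comp_sub_const a c
  have hquot : HasDerivAt (fun a => stdCdf (a - c) / stdCdf a)
      ((stdPdf (a - c) * stdCdf a - stdCdf (a - c) * stdPdf a) / stdCdf a ^ 2) a :=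
    hnum.div (hasDerivAt_stdCdf a) (stdCdf_pos a).ne'
  rw [hquot.deriv]
  have hnumerator := stdPdf_mul_stdCdf_sub_lt hc a
  exact div_pos (by linarith) (pow_pos (stdCdf_pos a) 2)

/-- For two Gaussian groups with common variance, Equal Improvability with budget δ
forces equal margins τ₀ - μ₀ = τ₁ - μ₁. -/
theorem ei_implies_equal_margins (μ₀ μ₁ σ δ τ₀ τ₁ : ℝ) (hσ : 0 < σ) (hδ : 0 < δ)
    (hEI : stdCdf ((τ₀ - δ - μ₀) / σ) / stdCdf ((τ₀ - μ₀) / σ)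
         = stdCdf ((τ₁ - δ - μ₁) / σ) / stdCdf ((τ₁ - μ₁) / σ)) :
    τ₀ - μ₀ = τ₁ - μ₁ := by
  have hshift : ∀ τ μ : ℝ, (τ - δ - μ) / σ = (τ - μ) / σ - δ / σ := fun τ μ => by ring
  rw [hshift, hshift] at hEI
  have hmargin := (strictMono_stdCdf_sub_div_stdCdf (div_pos hδ hσ)).injective hEI
  rwa [div_left_inj' hσ.ne'] at hmargin
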